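/- Let Φ be a reduced crystallographic simply-laced root system with base Δ, let α ∈ Δ, and let δ be a root with c_α(δ) = 1 and δ ≠ α. Then there exists a simple root γ ∈ Δ∖{α} with ⟨δ,γ⟩ > 0; consequently δ − γ is again a root and c_α(δ − γ) = 1. (This is the claim, established in the paper's proof, that α is the unique lowest weight of the Levi module 𝔲_α/[𝔲_α,𝔲_α].) -/

import Mathlib

/-!
Since `δ` has a positive coefficient, all its coefficients are nonnegative, so
`2 = ⟪δ, δ⟫ = ∑ γ, c_γ(δ) ⟪δ, γ⟫`. If every simple `γ ≠ α` paired nonpositively with `δ`, this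
would force `⟪δ, α⟫ ≥ 2`, i.e. `δ = α`. For distinct roots a positive pairing equals `1`, so the
reflection of `δ` in `γ` is `δ - γ`, whose `α`-coefficient is still `c_α(δ) = 1`.
-/

open scoped InnerProductSpace

namespace PaperRS

variable {E : Type*} [NormedAddCommGroup E] [InnerProductSpace ℝ E]

/-- A reduced crystallographic simply-laced root system, normalized so that every root has
squared length `2` (hence `⟪δ, ε⟫` is the Cartan integer `⟨δ, ε^∨⟩`). -/
structure IsRootSystem (Φ : Set E) : Prop where
  finite : Φ.Finite
  nonzero : (0 : E) ∉ Φ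
  span_top : Submodule.span ℝ Φ = ⊤
  norm_two : ∀ α ∈ Φ, ⟪α, α⟫_ℝ = 2
  reduced : ∀ α ∈ Φ, ∀ t : ℝ, t • α ∈ Φ → t = 1 ∨ t = -1
  cartan_int : ∀ α ∈ Φ, ∀ β ∈ Φ, ∃ n : ℤ, ⟪α, β⟫_ℝ = (n : ℝ)
  reflect_mem : ∀ α ∈ Φ, ∀ β ∈ Φ, β - ⟪β, α⟫_ℝ • α ∈ Φ

/-- Irreducibility: `Φ` is nonempty and cannot be split into two mutually orthogonal parts. -/
def IsIrreducible (Φ : Set E) : Prop :=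
  Φ.Nonempty ∧ ∀ Φ₁ Φ₂ : Set E, Φ = Φ₁ ∪ Φ₂ →
    (∀ a ∈ Φ₁, ∀ b ∈ Φ₂, ⟪a, b⟫_ℝ = 0) → Φ₁ = ∅ ∨ Φ₂ = ∅

/-- The reflection in (the hyperplane orthogonal to) a root `α` of squared length `2`. -/
def sRefl (α : E) : Function.End E := fun x => x - ⟪x, α⟫_ℝ • α

/-- The group generated by the reflections in the elements of `S`; since every reflection is
an involution, the submonoid generated by the reflections coincides with the generated group. -/
def genBy (S : Set E) : Submonoid (Function.End E) :=
  Submonoid.closure (sRefl '' S)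

/-- The Weyl group of `Φ`: the group generated by the reflections in all the roots. -/
abbrev WeylGroup (Φ : Set E) : Submonoid (Function.End E) := genBy Φ

/-- A base (set of simple roots) of `Φ`, together with the (unique) integer coefficients
`coeff δ γ` of each root `δ` with respect to the simple roots. -/
structure Base (Φ : Set E) where
  Δ : Finset E
  coeff : E → E → ℤ
  subset : ↑Δ ⊆ Φ
  indep : LinearIndependent ℝ (fun γ : {x : E // x ∈ Δ} => (γ : E))
  expand : ∀ δ ∈ Φ, δ = ∑ γ ∈ Δ, (coeff δ γ : ℝ) • γ
  sign : ∀ δ ∈ Φ, (∀ γ ∈ Δ, 0 ≤ coeff δ γ) ∨ (∀ γ ∈ Δ, coeff δ γ ≤ 0)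

variable {Φ : Set E}

/-- `θ` is the highest root of `Φ` with respect to the base `B`. -/
def IsHighest (B : Base Φ) (θ : E) : Prop :=
  θ ∈ Φ ∧ ∀ δ ∈ Φ, ∀ γ ∈ B.Δ, B.coeff δ γ ≤ B.coeff θ γ

/-- `α` is a Heisenberg simple root: the highest root `θ` has `α`-coefficient `2`, and every
root other than `±θ` has `α`-coefficient in `{-1, 0, 1}`. -/
def IsHeisenberg (B : Base Φ) (θ α : E) : Prop :=
  B.coeff θ α = 2 ∧
    ∀ δ ∈ Φ, δ ≠ θ → δ ≠ -θ →
      B.coeff δ α = -1 ∨ B.coeff δ α = 0 ∨ B.coeff δ α = 1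

/-- `α` is an extreme simple root with (unique) neighbour `β`. -/
def IsExtreme (B : Base Φ) (α β : E) : Prop :=
  β ∈ B.Δ ∧ β ≠ α ∧ ⟪α, β⟫_ℝ ≠ 0 ∧
    ∀ γ ∈ B.Δ, γ ≠ α → ⟪α, γ⟫_ℝ ≠ 0 → γ = β

/-- `Φ_α`: the roots with `α`-coefficient `1` that are orthogonal to `α`. -/
def PhiSet (B : Base Φ) (α : E) : Set E :=
  {ε ∈ Φ | B.coeff ε α = 1 ∧ ⟪ε, α⟫_ℝ = 0}

/-- `Ψ_α`: the roots `ε` with `α`-coefficient `1` and `⟪ε, α⟫ ≤ 0`. -/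
def PsiSet (B : Base Φ) (α : E) : Set E :=
  {ε ∈ Φ | B.coeff ε α = 1 ∧ ⟪ε, α⟫_ℝ ≤ 0}

namespace Base

variable (B : Base Φ)

lemma coeff_eq_of_eq_sum {δ : E} (hδ : δ ∈ Φ) {d : E → ℝ} (h : δ = ∑ γ ∈ B.Δ, d γ • γ)
    {γ : E} (hγ : γ ∈ B.Δ) : (B.coeff δ γ : ℝ) = d γ := by
  have hzero : ∑ x ∈ B.Δ.attach, ((B.coeff δ x : ℝ) - d x) • (x : E) = 0 := by
    rw [Finset.sum_attach B.Δ fun x => ((B.coeff δ x : ℝ) - d x) • x]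
    simp only [sub_smul, Finset.sum_sub_distrib]
    rw [← B.expand δ hδ, ← h, sub_self]
  exact sub_eq_zero.mp <| linearIndependent_iff'.mp B.indep B.Δ.attach
    (fun x => (B.coeff δ x : ℝ) - d x) hzero ⟨γ, hγ⟩ (Finset.mem_attach _ _)

lemma coeff_sub {δ ε : E} (hδ : δ ∈ Φ) (hε : ε ∈ Φ) (hδε : δ - ε ∈ Φ) {γ : E} (hγ : γ ∈ B.Δ) :
    B.coeff (δ - ε) γ = B.coeff δ γ - B.coeff ε γ := by
  have hexp : δ - ε = ∑ x ∈ B.Δ, ((B.coeff δ x : ℝ) - B.coeff ε x) • x := by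
    simp only [sub_smul, Finset.sum_sub_distrib]
    rw [← B.expand δ hδ, ← B.expand ε hε]
  exact_mod_cast B.coeff_eq_of_eq_sum hδε hexp hγ

lemma coeff_simple_of_ne {γ γ' : E} (hγ : γ ∈ B.Δ) (hγ' : γ' ∈ B.Δ) (hne : γ' ≠ γ) :
    B.coeff γ γ' = 0 := by
  classical
  have hexp : γ = ∑ x ∈ B.Δ, (if x = γ then (1 : ℝ) else 0) • x := by
    simp only [ite_smul, one_smul, zero_smul, Finset.sum_ite_eq', if_pos hγ]
  exact_mod_cast (B.coeff_eq_of_eq_sum (B.subset hγ) hexp hγ').trans (if_neg hne)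

lemma coeff_nonneg_of_coeff_pos {δ α : E} (hδ : δ ∈ Φ) (hα : α ∈ B.Δ) (hpos : 0 < B.coeff δ α)
    {γ : E} (hγ : γ ∈ B.Δ) : 0 ≤ B.coeff δ γ :=
  (B.sign δ hδ).resolve_right (fun h => (h α hα).not_gt hpos) γ hγ

lemma inner_self_eq_sum_coeff_mul_inner {δ : E} (hδ : δ ∈ Φ) :
    ⟪δ, δ⟫_ℝ = ∑ γ ∈ B.Δ, (B.coeff δ γ : ℝ) * ⟪δ, γ⟫_ℝ := by
  calc ⟪δ, δ⟫_ℝ = ⟪δ, ∑ γ ∈ B.Δ, (B.coeff δ γ : ℝ) • γ⟫_ℝ := by rw [← B.expand δ hδ]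
    _ = ∑ γ ∈ B.Δ, (B.coeff δ γ : ℝ) * ⟪δ, γ⟫_ℝ := by simp only [inner_sum, real_inner_smul_right]

end Base

namespace IsRootSystem

variable (hΦ : IsRootSystem Φ)
include hΦ

lemma inner_lt_two {δ ε : E} (hδ : δ ∈ Φ) (hε : ε ∈ Φ) (hne : δ ≠ ε) : ⟪δ, ε⟫_ℝ < 2 := by
  have hpos : 0 < ⟪δ - ε, δ - ε⟫_ℝ := real_inner_self_pos.mpr (sub_ne_zero.mpr hne)
  have hexp : ⟪δ - ε, δ - ε⟫_ℝ = ⟪δ, δ⟫_ℝ - 2 * ⟪δ, ε⟫_ℝ + ⟪ε, ε⟫_ℝ := by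
    rw [inner_sub_left, inner_sub_right, inner_sub_right, real_inner_comm ε δ]; ring
  rw [hexp, hΦ.norm_two δ hδ, hΦ.norm_two ε hε] at hpos
  linarith

lemma inner_le_one {δ ε : E} (hδ : δ ∈ Φ) (hε : ε ∈ Φ) (hne : δ ≠ ε) : ⟪δ, ε⟫_ℝ ≤ 1 := by
  obtain ⟨n, hn⟩ := hΦ.cartan_int δ hδ ε hε
  have hlt := hΦ.inner_lt_two hδ hε hne
  rw [hn] at hlt ⊢
  exact_mod_cast Int.lt_add_one_iff.mp (by exact_mod_cast hlt)

lemma inner_eq_one_of_pos {δ ε : E} (hδ : δ ∈ Φ) (hε : ε ∈ Φ) (hne : δ ≠ ε)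
    (hpos : 0 < ⟪δ, ε⟫_ℝ) : ⟪δ, ε⟫_ℝ = 1 := by
  obtain ⟨n, hn⟩ := hΦ.cartan_int δ hδ ε hε
  have hle := hΦ.inner_le_one hδ hε hne
  rw [hn] at hle hpos ⊢
  exact_mod_cast le_antisymm (by exact_mod_cast hle) (by exact_mod_cast hpos : (0 : ℤ) < n)

lemma sub_mem_of_inner_pos {δ ε : E} (hδ : δ ∈ Φ) (hε : ε ∈ Φ) (hne : δ ≠ ε)
    (hpos : 0 < ⟪δ, ε⟫_ℝ) : δ - ε ∈ Φ := by
  simpa [hΦ.inner_eq_one_of_pos hδ hε hne hpos] using hΦ.reflect_mem ε hε δ hδ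

end IsRootSystem

lemma exists_simple_ne_inner_pos (hΦ : IsRootSystem Φ) (B : Base Φ) {α δ : E} (hα : α ∈ B.Δ)
    (hδ : δ ∈ Φ) (hc : B.coeff δ α = 1) (hne : δ ≠ α) :
    ∃ γ ∈ B.Δ, γ ≠ α ∧ 0 < ⟪δ, γ⟫_ℝ := by
  classical
  by_contra! hnonpos
  have hrest : ∑ γ ∈ B.Δ.erase α, (B.coeff δ γ : ℝ) * ⟪δ, γ⟫_ℝ ≤ 0 :=
    Finset.sum_nonpos fun γ hγ => mul_nonpos_of_nonneg_of_nonpos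
      (by exact_mod_cast B.coeff_nonneg_of_coeff_pos hδ hα (by omega) (Finset.mem_of_mem_erase hγ))
      (hnonpos γ (Finset.mem_of_mem_erase hγ) (Finset.ne_of_mem_erase hγ))
  have htwo : (2 : ℝ) ≤ ⟪δ, α⟫_ℝ := calc
    (2 : ℝ) = ⟪δ, δ⟫_ℝ := (hΦ.norm_two δ hδ).symm
    _ = ∑ γ ∈ B.Δ, (B.coeff δ γ : ℝ) * ⟪δ, γ⟫_ℝ := B.inner_self_eq_sum_coeff_mul_inner hδ
    _ = ⟪δ, α⟫_ℝ + ∑ γ ∈ B.Δ.erase α, (B.coeff δ γ : ℝ) * ⟪δ, γ⟫_ℝ := by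
      rw [← Finset.add_sum_erase _ _ hα, hc, Int.cast_one, one_mul]
    _ ≤ ⟪δ, α⟫_ℝ := by linarith
  linarith [hΦ.inner_le_one hδ (B.subset hα) hne]

/-- If `δ` is a root with `α`-coefficient `1` and `δ ≠ α`, then there is a simple root
`γ ≠ α` with `⟪δ, γ⟫ > 0`; consequently `δ - γ` is again a root with `α`-coefficient `1`. -/
theorem exists_simple_root_pos_pairing
    (hΦ : IsRootSystem Φ) (B : Base Φ)
    {α : E} (hα : α ∈ B.Δ) {δ : E} (hδ : δ ∈ Φ) (hc : B.coeff δ α = 1) (hne : δ ≠ α) :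
    ∃ γ ∈ B.Δ, γ ≠ α ∧ 0 < ⟪δ, γ⟫_ℝ ∧ δ - γ ∈ Φ ∧ B.coeff (δ - γ) α = 1 := by
  obtain ⟨γ, hγ, hγα, hpos⟩ := exists_simple_ne_inner_pos hΦ B hα hδ hc hne
  have hδγ : δ ≠ γ := by
    rintro rfl
    simp [B.coeff_simple_of_ne hγ hα hγα.symm] at hc
  have hmem := hΦ.sub_mem_of_inner_pos hδ (B.subset hγ) hδγ hpos
  refine ⟨γ, hγ, hγα, hpos, hmem, ?_⟩
  rw [B.coeff_sub hδ (B.subset hγ) hmem hα, hc, B.coeff_simple_of_ne hγ hα hγα.symm, sub_zero]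

end PaperRS
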